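/- arXiv:2409.15892 — 3 statements merged into one kernel-verified Lean document; each statement's English description precedes it below -/
import Mathlib

section
/- Let S_P = (S, s_I, G, Succ) be an unlabeled state model and let ∼ be a faithful equivalence relation on S. If s and t are states with s ∼ t, then V*(s) = V*(t), i.e., the minimum length of a goal-reaching trajectory seeded at s equals that seeded at t (and one exists from s iff one exists from t). -/
/-- A relation `r` is faithful for the model `(S, s_I, G, Succ)`. -/
def Faithful {S : Type*} (Succ : S → S → Prop) (G : Set S) (r : S → S → Prop) : Prop :=
  (∀ s s' t, Succ s s' → r t s → ∃ t', Succ t t' ∧ r t' s') ∧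
  (∀ s t, r s t → (s ∈ G ↔ t ∈ G))

/-- There is a goal-reaching trajectory of length `n` seeded at `s`:
a sequence `s = s_0, s_1, …, s_n` with `(s_i, s_{i+1}) ∈ Succ` and `s_n ∈ G`. -/
def GoalReach {S : Type*} (Succ : S → S → Prop) (G : Set S) (s : S) (n : ℕ) : Prop :=
  ∃ τ : ℕ → S, τ 0 = s ∧ (∀ i < n, Succ (τ i) (τ (i + 1))) ∧ τ n ∈ G

/-! Faithfulness lets a goal-reaching trajectory from `s` be shadowed, one transition at a time,
by a trajectory of the same length from any `t ∼ s`; by symmetry of `∼`, the states `s` and `t`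
then have the same set of goal-reaching lengths, hence the same optimal cost. -/

section GoalReach

variable {S : Type*} {Succ : S → S → Prop} {G : Set S}

theorem goalReach_zero_iff {s : S} : GoalReach Succ G s 0 ↔ s ∈ G := by
  constructor
  · rintro ⟨τ, rfl, -, hgoal⟩
    exact hgoal
  · intro hs
    exact ⟨fun _ => s, rfl, fun i hi => absurd hi (Nat.not_lt_zero i), hs⟩

theorem goalReach_succ_iff {s : S} {n : ℕ} :
    GoalReach Succ G s (n + 1) ↔ ∃ s', Succ s s' ∧ GoalReach Succ G s' n := by
  constructor
  · rintro ⟨τ, rfl, hstep, hgoal⟩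
    exact ⟨τ 1, hstep 0 n.succ_pos, fun i => τ (i + 1), rfl,
      fun i hi => hstep (i + 1) (Nat.succ_lt_succ hi), hgoal⟩
  · rintro ⟨s', hss', τ, rfl, hstep, hgoal⟩
    refine ⟨fun i => Nat.casesOn i s τ, rfl, ?_, hgoal⟩
    rintro (_ | i) hi
    · exact hss'
    · exact hstep i (Nat.lt_of_succ_lt_succ hi)

variable {r : S → S → Prop}

theorem Faithful.goalReach (hfaithful : Faithful Succ G r) {n : ℕ} :
    ∀ {s t : S}, r t s → GoalReach Succ G s n → GoalReach Succ G t n := by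
  induction n with
  | zero =>
    intro s t hts hs
    rw [goalReach_zero_iff] at hs ⊢
    exact (hfaithful.2 t s hts).mpr hs
  | succ n ih =>
    intro s t hts hs
    rw [goalReach_succ_iff] at hs ⊢
    obtain ⟨s', hss', hs'⟩ := hs
    obtain ⟨t', htt', ht's'⟩ := hfaithful.1 s s' t hss' hts
    exact ⟨t', htt', ih ht's' hs'⟩

theorem Faithful.goalReach_iff (hfaithful : Faithful Succ G r) (hsymm : ∀ ⦃x y⦄, r x y → r y x)
    {s t : S} (hst : r s t) (n : ℕ) : GoalReach Succ G s n ↔ GoalReach Succ G t n :=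
  ⟨hfaithful.goalReach (hsymm hst), hfaithful.goalReach hst⟩

end GoalReach

theorem optimal_cost_invariant_general {S : Type*}
    (G : Set S) (Succ : S → S → Prop) (r : S → S → Prop)
    (hequiv : Equivalence r) (hfaithful : Faithful Succ G r)
    (s t : S) (hst : r s t) :
    ((∃ n, GoalReach Succ G s n) ↔ (∃ n, GoalReach Succ G t n)) ∧
    sInf {n | GoalReach Succ G s n} = sInf {n | GoalReach Succ G t n} := by
  have hreach := hfaithful.goalReach_iff (fun _ _ => hequiv.symm) hst
  exact ⟨exists_congr hreach, congrArg sInf (Set.ext hreach)⟩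

/-- If `∼` is a faithful equivalence relation and `s ∼ t`, then a
goal-reaching trajectory exists from `s` iff one exists from `t`, and the minimum
length of a goal-reaching trajectory seeded at `s` equals that seeded at `t`,
i.e., `V*(s) = V*(t)`. -/
theorem optimal_cost_invariant {S : Type*}
    (sI : S) (G : Set S) (Succ : S → S → Prop) (r : S → S → Prop)
    (hequiv : Equivalence r) (hfaithful : Faithful Succ G r)
    (s t : S) (hst : r s t) :
    ((∃ n, GoalReach Succ G s n) ↔ (∃ n, GoalReach Succ G t n)) ∧
    sInf {n | GoalReach Succ G s n} = sInf {n | GoalReach Succ G t n} :=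
  optimal_cost_invariant_general G Succ r hequiv hfaithful s t hst
end

section
/- Let S_P = (S, s_I, G, Succ) be an unlabeled state model, let ∼ be a faithful equivalence relation on S, and let π ⊆ S × S be a policy that is uniform over ∼. Then π solves S_P (i.e., every maximal π-trajectory seeded at s_I is finite and ends in a goal state) if and only if the lifted policy π̃ = {([s],[s']) : (s,s') ∈ π} solves the abstraction of S_P induced by ∼ (i.e., every maximal π̃-trajectory seeded at [s_I] is finite and ends in a goal class). -/
/-- A policy `π` is uniform over the equivalence `r` iff whenever `s ∼ t` and
`s' ∼ t'`, `(s,s') ∈ π` iff `(t,t') ∈ π`. -/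
def Uniform {S : Type*} (r : S → S → Prop) (π : S → S → Prop) : Prop :=
  ∀ s t s' t', r s t → r s' t' → (π s s' ↔ π t t')

/-- A policy (given via the combined step relation `step = Succ ∩ π`) solves the
model with goals `G` from state `s0` iff every maximal `π`-trajectory seeded at
`s0` is finite and ends in a goal state: there is no infinite `π`-trajectory
seeded at `s0`, and every non-extendable finite `π`-trajectory seeded at `s0`
ends in a goal state. -/
def Solves {S : Type*} (step : S → S → Prop) (G : Set S) (s0 : S) : Prop :=
  (¬ ∃ τ : ℕ → S, τ 0 = s0 ∧ ∀ i, step (τ i) (τ (i + 1))) ∧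
  (∀ (n : ℕ) (τ : ℕ → S), τ 0 = s0 → (∀ i < n, step (τ i) (τ (i + 1))) →
    (∀ s', ¬ step (τ n) s') → τ n ∈ G)

/-- The successor relation of the abstraction induced by a `Setoid`. -/
def AbsSucc {S : Type*} (st : Setoid S) (Succ : S → S → Prop) :
    Quotient st → Quotient st → Prop :=
  fun q q' => ∃ t t', Quotient.mk st t = q ∧ Quotient.mk st t' = q' ∧ Succ t t'

/-- The lifted policy `π̃ = {([s],[s']) : (s,s') ∈ π}`. -/
def AbsPolicy {S : Type*} (st : Setoid S) (π : S → S → Prop) :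
    Quotient st → Quotient st → Prop :=
  fun q q' => ∃ s s', Quotient.mk st s = q ∧ Quotient.mk st s' = q' ∧ π s s'

/-- The goal classes `G̃ = {[s] : s ∈ G}` of the abstraction. -/
def AbsGoal {S : Type*} (st : Setoid S) (G : Set S) : Set (Quotient st) :=
  {q | ∃ s ∈ G, Quotient.mk st s = q}

structure IsBoundedMorphism {S T : Type*} (R : S → S → Prop) (R' : T → T → Prop)
    (f : S → T) : Prop where
  forth : ∀ {s s'}, R s s' → R' (f s) (f s')
  back : ∀ {s q'}, R' (f s) q' → ∃ s', R s s' ∧ f s' = q'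

namespace IsBoundedMorphism

variable {S T : Type*} {R : S → S → Prop} {R' : T → T → Prop} {f : S → T}

theorem forall_not_step_iff (hf : IsBoundedMorphism R R' f) (s : S) :
    (∀ s', ¬ R s s') ↔ ∀ q', ¬ R' (f s) q' := by
  refine ⟨fun h q' hq' => ?_, fun h s' hs' => h (f s') (hf.forth hs')⟩
  obtain ⟨s', hs', -⟩ := hf.back hq'
  exact h s' hs'

theorem exists_lift (hf : IsBoundedMorphism R R' f) (s₀ : S) (σ : ℕ → T)
    (hσ₀ : σ 0 = f s₀) :
    ∃ τ : ℕ → S, τ 0 = s₀ ∧ ∀ n, (∀ i < n, R' (σ i) (σ (i + 1))) →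
      (∀ i < n, R (τ i) (τ (i + 1))) ∧ f (τ n) = σ n := by
  classical
  let next (n : ℕ) (s : S) : S :=
    if h : ∃ s', R s s' ∧ f s' = σ (n + 1) then h.choose else s
  refine ⟨fun n => Nat.rec s₀ next n, rfl, fun n => ?_⟩
  induction n with
  | zero => exact fun _ => ⟨fun i hi => absurd hi (Nat.not_lt_zero i), hσ₀.symm⟩
  | succ n ih =>
    intro hσ
    obtain ⟨hτ, hfτ⟩ := ih fun i hi => hσ i (Nat.lt_succ_of_lt hi)
    have hlift : ∃ s', R (Nat.rec s₀ next n) s' ∧ f s' = σ (n + 1) :=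
      hf.back (hfτ ▸ hσ n (Nat.lt_succ_self n))
    have hnext : next n (Nat.rec s₀ next n) = hlift.choose := dif_pos hlift
    refine ⟨fun i hi => ?_, by simpa only [hnext] using hlift.choose_spec.2⟩
    rcases Nat.lt_succ_iff_lt_or_eq.mp hi with hi | rfl
    · exact hτ i hi
    · simpa only [hnext] using hlift.choose_spec.1

theorem exists_infinite_trajectory_iff (hf : IsBoundedMorphism R R' f) (s₀ : S) :
    (∃ τ : ℕ → S, τ 0 = s₀ ∧ ∀ i, R (τ i) (τ (i + 1))) ↔
      ∃ σ : ℕ → T, σ 0 = f s₀ ∧ ∀ i, R' (σ i) (σ (i + 1)) := by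
  constructor
  · rintro ⟨τ, hτ₀, hτ⟩
    exact ⟨f ∘ τ, congrArg f hτ₀, fun i => hf.forth (hτ i)⟩
  · rintro ⟨σ, hσ₀, hσ⟩
    obtain ⟨τ, hτ₀, hτ⟩ := hf.exists_lift s₀ σ hσ₀
    exact ⟨τ, hτ₀, fun i => (hτ (i + 1) fun j _ => hσ j).1 i (Nat.lt_succ_self i)⟩

theorem solves_iff {G : Set S} {G' : Set T} (hf : IsBoundedMorphism R R' f)
    (hG : ∀ s, f s ∈ G' ↔ s ∈ G) (s₀ : S) :
    Solves R G s₀ ↔ Solves R' G' (f s₀) := by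
  rw [Solves, Solves, hf.exists_infinite_trajectory_iff]
  refine and_congr_right fun _ =>
    ⟨fun hgoal n σ hσ₀ hσ hσmax => ?_, fun hgoal n τ hτ₀ hτ hτmax => ?_⟩
  · obtain ⟨τ, hτ₀, hlift⟩ := hf.exists_lift s₀ σ hσ₀
    obtain ⟨hτ, hfτ⟩ := hlift n hσ
    rw [← hfτ] at hσmax ⊢
    exact (hG _).mpr (hgoal n τ hτ₀ hτ ((hf.forall_not_step_iff _).mpr hσmax))
  · exact (hG _).mp (hgoal n (f ∘ τ) (congrArg f hτ₀) (fun i hi => hf.forth (hτ i hi))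
      ((hf.forall_not_step_iff _).mp hτmax))

end IsBoundedMorphism

section Abstraction

variable {S : Type*} (st : Setoid S)

theorem isBoundedMorphism_quotientMk {Succ π : S → S → Prop}
    (hSucc : ∀ s s' t, Succ s s' → st.r t s → ∃ t', Succ t t' ∧ st.r t' s')
    (huniform : Uniform (fun s t => st.r s t) π) :
    IsBoundedMorphism (fun s s' => Succ s s' ∧ π s s')
      (fun q q' => AbsSucc st Succ q q' ∧ AbsPolicy st π q q') (Quotient.mk st) where
  forth h := ⟨⟨_, _, rfl, rfl, h.1⟩, ⟨_, _, rfl, rfl, h.2⟩⟩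
  back := by
    rintro s q' ⟨⟨t, t', ht, rfl, hSucc_t⟩, ⟨u, u', hu, hu', hπ_u⟩⟩
    obtain ⟨s', hSucc_s, hs't'⟩ := hSucc t t' s hSucc_t (Quotient.exact ht.symm)
    have hus : st.r u s := Quotient.exact hu
    have hu's' : st.r u' s' := Quotient.exact (hu'.trans (Quotient.sound hs't').symm)
    exact ⟨s', ⟨hSucc_s, (huniform u s u' s' hus hu's').mp hπ_u⟩, Quotient.sound hs't'⟩

theorem mk_mem_absGoal_iff {G : Set S} (hG : ∀ s t, st.r s t → (s ∈ G ↔ t ∈ G)) (s : S) :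
    Quotient.mk st s ∈ AbsGoal st G ↔ s ∈ G :=
  ⟨fun ⟨t, ht, hts⟩ => (hG t s (Quotient.exact hts)).mp ht, fun hs => ⟨s, hs, rfl⟩⟩

end Abstraction

/-- For a faithful equivalence `∼` and a policy `π` uniform over `∼`,
`π` solves the model `(S, s_I, G, Succ)` iff the lifted policy `π̃` solves the
abstraction induced by `∼`. -/
theorem solves_iff_solves_abstraction {S : Type*} (st : Setoid S)
    (sI : S) (G : Set S) (Succ : S → S → Prop) (π : S → S → Prop)
    (hfaithful : Faithful Succ G (fun s t => st.r s t))
    (huniform : Uniform (fun s t => st.r s t) π) :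
    Solves (fun s s' => Succ s s' ∧ π s s') G sI ↔
      Solves (fun q q' => AbsSucc st Succ q q' ∧ AbsPolicy st π q q')
        (AbsGoal st G) (Quotient.mk st sI) :=
  (isBoundedMorphism_quotientMk st hfaithful.1 huniform).solves_iff
    (mk_mem_absGoal_iff st hfaithful.2) sI
end

section
/- Let S_P = (S, s_I, G, Succ) be the unlabeled state model of a STRIPS problem over objects O (with goal atoms encoded in the states), let ≃ be the state-isomorphism equivalence (s ≃ t iff t = σ·s for some permutation σ of O), and let π be a function-based policy π = {(s, s') : (f(s), f(s')) ∈ R} where f is invariant under ≃. Then π solves S_P (every maximal π-trajectory seeded at s_I is finite and ends in a goal state) if and only if the lifted policy π̃ = {([s],[s']) : (s,s') ∈ π} solves the abstraction of S_P induced by ≃. -/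
/-- A ground atom over a signature in which every relation symbol `p` has an
associated goal symbol `p_g` of the same arity (`true` flags the goal symbol). -/
def GAtom (P : Type*) (ar : P → ℕ) (O : Type*) : Type _ :=
  Σ p : P, Bool × (Fin (ar p) → O)

/-- The action of a permutation of the objects on a ground atom. -/
def actAtom {P O : Type*} {ar : P → ℕ} (σ : Equiv.Perm O) :
    GAtom P ar O → GAtom P ar O :=
  fun a => ⟨a.1, (a.2.1, ⇑σ ∘ a.2.2)⟩

/-- The elementwise action of a permutation of the objects on a state. -/
def actState {P O : Type*} {ar : P → ℕ} (σ : Equiv.Perm O)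
    (s : Set (GAtom P ar O)) : Set (GAtom P ar O) :=
  actAtom σ '' s

/-- State isomorphism: `s ≃ t` iff `t = σ·s` for some permutation `σ` of the objects. -/
def IsoState {P O : Type*} {ar : P → ℕ} (s t : Set (GAtom P ar O)) : Prop :=
  ∃ σ : Equiv.Perm O, t = actState σ s

theorem actState_refl {P O : Type*} {ar : P → ℕ} (s : Set (GAtom P ar O)) :
    actState (Equiv.refl O) s = s := by
  have h : (actAtom (Equiv.refl O) : GAtom P ar O → GAtom P ar O) = id :=
    funext fun a => rfl
  simp [actState, h]

theorem actState_comp {P O : Type*} {ar : P → ℕ} (σ σ' : Equiv.Perm O)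
    (s : Set (GAtom P ar O)) :
    actState σ' (actState σ s) = actState (σ.trans σ') s := by
  rw [actState, actState, actState, Set.image_image]
  rfl

/-- State isomorphism is an equivalence relation; this is the corresponding setoid. -/
def isoSetoid (P O : Type*) (ar : P → ℕ) : Setoid (Set (GAtom P ar O)) where
  r := IsoState
  iseqv := by
    constructor
    · exact fun s => ⟨Equiv.refl O, (actState_refl s).symm⟩
    · rintro s t ⟨σ, rfl⟩
      exact ⟨σ.symm, by rw [actState_comp, Equiv.self_trans_symm, actState_refl]⟩
    · rintro s t u ⟨σ, rfl⟩ ⟨σ', rfl⟩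
      exact ⟨σ.trans σ', actState_comp σ σ' s⟩

/-- A state is a goal state iff every goal atom `(p_g, ū) ∈ s` has `(p, ū) ∈ s`. -/
def IsGoalState {P O : Type*} {ar : P → ℕ} (s : Set (GAtom P ar O)) : Prop :=
  ∀ (p : P) (u : Fin (ar p) → O),
    (⟨p, (true, u)⟩ : GAtom P ar O) ∈ s → (⟨p, (false, u)⟩ : GAtom P ar O) ∈ s

/-- The successor relation of a STRIPS problem: `(s, s') ∈ Succ` iff for some schema
`a` and object tuple `ō`, `pre_a(ō) ⊆ s` and `s' = (s \ del_a(ō)) ∪ add_a(ō)`. -/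
def StripsSucc {P O A : Type*} {ar : P → ℕ} (m : A → ℕ)
    (pre add del : ∀ a : A, (Fin (m a) → O) → Set (GAtom P ar O))
    (s s' : Set (GAtom P ar O)) : Prop :=
  ∃ (a : A) (o : Fin (m a) → O),
    pre a o ⊆ s ∧ s' = (s \ del a o) ∪ add a o

lemma actAtom_left_inv {P O : Type*} {ar : P → ℕ} (σ : Equiv.Perm O)
    (a : GAtom P ar O) : actAtom σ.symm (actAtom σ a) = a := by
  obtain ⟨p, b, u⟩ := a
  show (⟨p, (b, ⇑σ.symm ∘ (⇑σ ∘ u))⟩ : GAtom P ar O) = ⟨p, (b, u)⟩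
  have : ⇑σ.symm ∘ (⇑σ ∘ u) = u := by
    funext i; exact σ.symm_apply_apply _
  rw [this]

lemma actAtom_injective {P O : Type*} {ar : P → ℕ} (σ : Equiv.Perm O) :
    Function.Injective (actAtom (P := P) (ar := ar) (O := O) σ) :=
  Function.LeftInverse.injective (actAtom_left_inv σ)

lemma succ_equivariant {P O A : Type*} {ar : P → ℕ} {m : A → ℕ}
    {pre add del : ∀ a : A, (Fin (m a) → O) → Set (GAtom P ar O)}
    (hpre : ∀ (σ : Equiv.Perm O) a o, actState σ (pre a o) = pre a (⇑σ ∘ o))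
    (hadd : ∀ (σ : Equiv.Perm O) a o, actState σ (add a o) = add a (⇑σ ∘ o))
    (hdel : ∀ (σ : Equiv.Perm O) a o, actState σ (del a o) = del a (⇑σ ∘ o))
    (σ : Equiv.Perm O) {s s' : Set (GAtom P ar O)}
    (h : StripsSucc m pre add del s s') :
    StripsSucc m pre add del (actState σ s) (actState σ s') := by
  obtain ⟨a, o, h1, h2⟩ := h
  refine ⟨a, ⇑σ ∘ o, ?_, ?_⟩
  · rw [← hpre σ a o]; exact Set.image_mono h1
  · calc actState σ s' = actState σ ((s \ del a o) ∪ add a o) := by rw [h2]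
      _ = (actState σ s \ actState σ (del a o)) ∪ actState σ (add a o) := by
          simp only [actState, Set.image_union,
            Set.image_diff (actAtom_injective σ)]
      _ = (actState σ s \ del a (⇑σ ∘ o)) ∪ add a (⇑σ ∘ o) := by
          rw [hdel, hadd]

lemma goal_equivariant {P O : Type*} {ar : P → ℕ} (σ : Equiv.Perm O)
    {s : Set (GAtom P ar O)} (h : IsGoalState s) :
    IsGoalState (actState σ s) := by
  intro p u hu
  obtain ⟨⟨q, b, v⟩, hv, heq⟩ := hu
  have hq : q = p := congrArg Sigma.fst heq
  subst hq
  have h2 : ((b, ⇑σ ∘ v) : Bool × (Fin (ar q) → O)) = (true, u) := by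
    have := (Sigma.mk.inj_iff.mp heq).2
    exact eq_of_heq this
  obtain ⟨hb, hvu⟩ := Prod.mk.injEq _ _ _ _ ▸ h2
  subst hb
  have hvs : (⟨q, (false, v)⟩ : GAtom P ar O) ∈ s := h q v hv
  exact ⟨⟨q, (false, v)⟩, hvs, by rw [← hvu]; rfl⟩

/-- For the unlabeled state model of a STRIPS problem (with goals
encoded in the states), state-isomorphism equivalence `≃`, and a function-based
policy `π = {(s,s') : (f(s), f(s')) ∈ R}` with `f` invariant under `≃`:
`π` solves the model iff the lifted policy `π̃` solves the abstraction induced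
by `≃`. -/
theorem strips_function_based_solves_iff_abstraction
    {P O A D : Type*} (ar : P → ℕ) (m : A → ℕ)
    (pre add del : ∀ a : A, (Fin (m a) → O) → Set (GAtom P ar O))
    (hfin : ∀ a o, (pre a o).Finite ∧ (add a o).Finite ∧ (del a o).Finite)
    (hpre : ∀ (σ : Equiv.Perm O) a o, actState σ (pre a o) = pre a (⇑σ ∘ o))
    (hadd : ∀ (σ : Equiv.Perm O) a o, actState σ (add a o) = add a (⇑σ ∘ o))
    (hdel : ∀ (σ : Equiv.Perm O) a o, actState σ (del a o) = del a (⇑σ ∘ o))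
    (sI : Set (GAtom P ar O))
    (f : Set (GAtom P ar O) → D)
    (hinv : ∀ s t, IsoState s t → f s = f t)
    (R : D → D → Prop) :
    Solves
        (fun s s' => StripsSucc m pre add del s s' ∧ R (f s) (f s'))
        {s | IsGoalState s} sI ↔
      Solves
        (fun q q' => AbsSucc (isoSetoid P O ar) (StripsSucc m pre add del) q q' ∧
          AbsPolicy (isoSetoid P O ar) (fun s s' => R (f s) (f s')) q q')
        (AbsGoal (isoSetoid P O ar) {s | IsGoalState s})
        (Quotient.mk (isoSetoid P O ar) sI) := by
  classical
  set st := isoSetoid P O ar with hst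
  set Succ := StripsSucc m pre add del with hS
  set cstep : Set (GAtom P ar O) → Set (GAtom P ar O) → Prop :=
    fun s s' => Succ s s' ∧ R (f s) (f s') with hc
  set astep : Quotient st → Quotient st → Prop :=
    fun q q' => AbsSucc st Succ q q' ∧
      AbsPolicy st (fun s s' => R (f s) (f s')) q q' with hA
  have hfq : ∀ s t : Set (GAtom P ar O),
      Quotient.mk st s = Quotient.mk st t → f s = f t := fun s t h =>
    hinv s t (Quotient.exact h)
  have fwd : ∀ s s', cstep s s' →
      astep (Quotient.mk st s) (Quotient.mk st s') := by
    rintro s s' ⟨h1, h2⟩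
    exact ⟨⟨s, s', rfl, rfl, h1⟩, ⟨s, s', rfl, rfl, h2⟩⟩
  have lift : ∀ s q', astep (Quotient.mk st s) q' →
      ∃ s', cstep s s' ∧ Quotient.mk st s' = q' := by
    rintro s q' ⟨⟨t, t', ht, ht', hSucc⟩, ⟨u, u', hu, hu', hR⟩⟩
    have hts : IsoState t s := Quotient.exact ht
    obtain ⟨σ, rfl⟩ := hts
    have hmk : Quotient.mk st (actState σ t') = q' := by
      refine Eq.trans ?_ ht'
      exact (Quotient.sound (⟨σ, rfl⟩ : IsoState t' (actState σ t'))).symm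
    refine ⟨actState σ t', ⟨succ_equivariant hpre hadd hdel σ hSucc, ?_⟩, hmk⟩
    have e1 : f u = f (actState σ t) := hfq _ _ hu
    have e2 : f u' = f (actState σ t') := hfq _ _ (hu'.trans hmk.symm)
    rw [← e1, ← e2]; exact hR
  have goalQ : ∀ s : Set (GAtom P ar O),
      Quotient.mk st s ∈ AbsGoal st {s | IsGoalState s} ↔ IsGoalState s := by
    intro s
    constructor
    · rintro ⟨t, htG, ht⟩
      obtain ⟨σ, rfl⟩ : IsoState t s := Quotient.exact ht
      exact goal_equivariant σ htG
    · intro h; exact ⟨s, h, rfl⟩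
  constructor
  · rintro ⟨hfin1, hfin2⟩
    constructor
    · rintro ⟨τ, hτ0, hτ⟩
      let g : ℕ → Set (GAtom P ar O) := fun i => Nat.rec sI (fun i gi =>
        if h : ∃ s', cstep gi s' ∧ Quotient.mk st s' = τ (i + 1) then
          h.choose else gi) i
      have stepi : ∀ i, Quotient.mk st (g i) = τ i →
          cstep (g i) (g (i + 1)) ∧ Quotient.mk st (g (i + 1)) = τ (i + 1) := by
        intro i hi
        have hex : ∃ s', cstep (g i) s' ∧ Quotient.mk st s' = τ (i + 1) :=
          lift (g i) (τ (i + 1)) (hi ▸ hτ i)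
        have hg : g (i + 1) = hex.choose := dif_pos hex
        rw [hg]
        exact ⟨hex.choose_spec.1, hex.choose_spec.2⟩
      have mkg : ∀ i, Quotient.mk st (g i) = τ i := by
        intro i
        induction i with
        | zero => exact hτ0.symm
        | succ i ih => exact (stepi i ih).2
      exact hfin1 ⟨g, rfl, fun i => (stepi i (mkg i)).1⟩
    · intro n τ hτ0 hτ hmax
      let g : ℕ → Set (GAtom P ar O) := fun i => Nat.rec sI (fun i gi =>
        if h : ∃ s', cstep gi s' ∧ Quotient.mk st s' = τ (i + 1) then
          h.choose else gi) i
      have stepi : ∀ i < n, Quotient.mk st (g i) = τ i →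
          cstep (g i) (g (i + 1)) ∧ Quotient.mk st (g (i + 1)) = τ (i + 1) := by
        intro i hin hi
        have hex : ∃ s', cstep (g i) s' ∧ Quotient.mk st s' = τ (i + 1) :=
          lift (g i) (τ (i + 1)) (hi ▸ hτ i hin)
        have hg : g (i + 1) = hex.choose := dif_pos hex
        rw [hg]
        exact ⟨hex.choose_spec.1, hex.choose_spec.2⟩
      have mkg : ∀ i, i ≤ n → Quotient.mk st (g i) = τ i := by
        intro i
        induction i with
        | zero => intro _; exact hτ0.symm
        | succ i ih =>
            intro h
            exact (stepi i (Nat.lt_of_succ_le h) (ih (Nat.le_of_succ_le h))).2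
      have hnostep : ∀ s', ¬ cstep (g n) s' := by
        intro s' hs'
        exact hmax (Quotient.mk st s') (mkg n le_rfl ▸ fwd _ _ hs')
      have hg : IsGoalState (g n) :=
        hfin2 n g rfl (fun i hi => (stepi i hi (mkg i hi.le)).1) hnostep
      rw [← mkg n le_rfl]
      exact (goalQ (g n)).mpr hg
  · rintro ⟨hfin1, hfin2⟩
    constructor
    · rintro ⟨τ, hτ0, hτ⟩
      exact hfin1 ⟨fun i => Quotient.mk st (τ i), congrArg (Quotient.mk st) hτ0,
        fun i => fwd _ _ (hτ i)⟩
    · intro n τ hτ0 hτ hmax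
      have hnostep : ∀ q', ¬ astep (Quotient.mk st (τ n)) q' := by
        intro q' hq'
        obtain ⟨s', hs', _⟩ := lift (τ n) q' hq'
        exact hmax s' hs'
      have := hfin2 n (fun i => Quotient.mk st (τ i)) (congrArg (Quotient.mk st) hτ0)
        (fun i hi => fwd _ _ (hτ i hi)) hnostep
      exact (goalQ (τ n)).mp this
end
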